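/- Let k ≥ 2 and B ≥ 1 be integers, and set M = kB + 1, L = 36k⁴BM, and N = kL + (4B+2)·M·k(k−1)/2 + kB. Let g(x) = x(x−1)/2 for real x. Then for every integer a with 0 ≤ a ≤ k(k−1), it holds that k·g((N − aM)/k) + a·g(M−1) > k·g((N − (a+1)M)/k) + (a+1)·g(M−1). -/
import Mathlib


/-- In the W[1]-hardness reduction, with `k` big components splitting the
remaining vertices equally, creating one more isolated component of size `M − 1`
strictly decreases the total number of connected pairs, for every
`0 ≤ a ≤ k(k−1)`. Here `g x = x(x−1)/2` is the real extension of `binom(x, 2)`. -/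
theorem extra_component_decreases_pairs (k B : ℕ) (hk : 2 ≤ k) (hB : 1 ≤ B)
    (M L N : ℝ) (hM : M = k * B + 1) (hL : L = 36 * k ^ 4 * B * M)
    (hN : N = k * L + (4 * B + 2) * M * (k * (k - 1) / 2) + k * B)
    (g : ℝ → ℝ) (hg : ∀ y : ℝ, g y = y * (y - 1) / 2)
    (a : ℕ) (ha : (a : ℝ) ≤ k * (k - 1)) :
    k * g ((N - a * M) / k) + a * g (M - 1) >
      k * g ((N - (a + 1) * M) / k) + (a + 1) * g (M - 1) := by
  have hk2 : (2:ℝ) ≤ (k:ℝ) := by exact_mod_cast hk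
  have hB1 : (1:ℝ) ≤ (B:ℝ) := by exact_mod_cast hB
  have hk0 : (0:ℝ) < (k:ℝ) := by linarith
  have hke : (k:ℝ) ≠ 0 := ne_of_gt hk0
  have ha0 : (0:ℝ) ≤ (a:ℝ) := Nat.cast_nonneg a
  have hM3 : (3:ℝ) ≤ M := by rw [hM]; nlinarith
  have hkk : (0:ℝ) ≤ (k:ℝ) * ((k:ℝ) - 1) := by nlinarith
  have hNa : 2 * (k:ℝ) * L - M - k ≤ 2 * (N - a * M) - M - k := by
    rw [hN]
    nlinarith [mul_le_mul_of_nonneg_right ha (by linarith : (0:ℝ) ≤ M),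
      mul_nonneg (mul_nonneg (by linarith : (0:ℝ) ≤ 2 * (B:ℝ)) hkk) (by linarith : (0:ℝ) ≤ M)]
  have key : (k:ℝ) * ((M - 1) * (M - 2)) < M * (2 * (N - a * M) - M - k) := by
    have h4 : (1:ℝ) ≤ (k:ℝ)^4 := by nlinarith [sq_nonneg ((k:ℝ)^2 - 1), sq_nonneg ((k:ℝ))]
    have hkM : (k:ℝ) ≤ (k:ℝ)^5 * B := by nlinarith
    have h1 : (k:ℝ) * ((M - 1) * (M - 2)) < M * (2 * k * L - M - k) := by
      rw [hL]
      nlinarith [mul_le_mul_of_nonneg_right hkM (mul_self_nonneg M),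
        mul_pos hk0 (by nlinarith : (0:ℝ) < M * M), mul_pos hk0 (by linarith : (0:ℝ) < M)]
    have h2 : M * (2 * (k:ℝ) * L - M - k) ≤ M * (2 * (N - a * M) - M - k) :=
      mul_le_mul_of_nonneg_left hNa (by linarith)
    linarith
  rw [gt_iff_lt, ← sub_pos]
  have heq : k * g ((N - a * M) / k) + a * g (M - 1) -
      (k * g ((N - (a + 1) * M) / k) + (a + 1) * g (M - 1)) =
      (M * (2 * (N - a * M) - M - k) - k * ((M - 1) * (M - 2))) / (2 * k) := by
    simp only [hg]
    field_simp
    ring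
  rw [heq]
  apply div_pos (by linarith) (by linarith)
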